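/- Fix n ∈ ℕ. The underlying normed space of \widehat{M}_n is the trace-class space 𝕋_n: for every a ∈ M_n, the norm of a in M_1(\widehat{M}_n), namely sup{ ‖φ^v(a)‖ : (E, v) a proper couple }, equals the trace norm ‖a‖_t of a (the sum of the singular values of a). -/

import Mathlib

open scoped BigOperators
open Matrix

noncomputable section

/-- Block-diagonal sum `u ⊕ w` of two square matrices with entries in `E`. -/
def MatDSum {E : Type*} [Zero E] {m k : ℕ}
    (u : Matrix (Fin m) (Fin m) E) (w : Matrix (Fin k) (Fin k) E) :
    Matrix (Fin (m + k)) (Fin (m + k)) E :=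
  Matrix.reindex finSumFinEquiv finSumFinEquiv (Matrix.fromBlocks u 0 0 w)

/-- Left action `S·u` of a scalar matrix on an `E`-valued matrix. -/
def scalLeft {E : Type*} [AddCommMonoid E] [Module ℂ E] {m : ℕ}
    (S : Matrix (Fin m) (Fin m) ℂ) (u : Matrix (Fin m) (Fin m) E) :
    Matrix (Fin m) (Fin m) E :=
  Matrix.of fun i j => ∑ k, S i k • u k j

/-- Right action `u·S` of a scalar matrix on an `E`-valued matrix. -/
def scalRight {E : Type*} [AddCommMonoid E] [Module ℂ E] {m : ℕ}
    (u : Matrix (Fin m) (Fin m) E) (S : Matrix (Fin m) (Fin m) ℂ) :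
    Matrix (Fin m) (Fin m) E :=
  Matrix.of fun i j => ∑ k, S k j • u i k

/-- The operator norm `‖S‖_o` of a complex scalar matrix, i.e. its norm as an
operator on the euclidean (Hilbert) space `ℂⁿ`. -/
noncomputable def opNorm {m : ℕ} (S : Matrix (Fin m) (Fin m) ℂ) : ℝ :=
  ‖LinearMap.toContinuousLinearMap (Matrix.toEuclideanLin S)‖

/-- The `m`-th amplification of a map `φ : E → F`: apply `φ` entrywise. -/
def matAmpl {E F : Type*} (φ : E → F) {m : ℕ} (u : Matrix (Fin m) (Fin m) E) :
    Matrix (Fin m) (Fin m) F :=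
  Matrix.of fun i j => φ (u i j)

/-- The operator `φ^v : M_n → E`, `(λ_{ij}) ↦ Σ_{i,j} λ_{ji} • x_{ij}`, associated with
`v = (x_{ij}) ∈ M_n(E)`. -/
def matPhi {E : Type*} [AddCommMonoid E] [Module ℂ E] {n : ℕ}
    (v : Matrix (Fin n) (Fin n) E) (a : Matrix (Fin n) (Fin n) ℂ) : E :=
  ∑ i, ∑ j, a j i • v i j

/-- `ν` is a matrix-norm on the complex vector space `E`: each `ν m` is a norm on
`M_m(E)`, and Axioms 1 and 2 of Effros/Ruan hold. -/
def IsMatrixNorm {E : Type} [AddCommGroup E] [Module ℂ E]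
    (ν : ∀ m : ℕ, Matrix (Fin m) (Fin m) E → ℝ) : Prop :=
  (∀ (m : ℕ) (u v : Matrix (Fin m) (Fin m) E), ν m (u + v) ≤ ν m u + ν m v) ∧
  (∀ (m : ℕ) (c : ℂ) (u : Matrix (Fin m) (Fin m) E), ν m (c • u) = ‖c‖ * ν m u) ∧
  (∀ (m : ℕ) (u : Matrix (Fin m) (Fin m) E), ν m u = 0 ↔ u = 0) ∧
  (∀ (m k : ℕ) (u : Matrix (Fin m) (Fin m) E),
      ν (m + k) (MatDSum u (0 : Matrix (Fin k) (Fin k) E)) = ν m u) ∧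
  (∀ (m : ℕ) (S : Matrix (Fin m) (Fin m) ℂ) (u : Matrix (Fin m) (Fin m) E),
      ν m (scalLeft S u) ≤ opNorm S * ν m u) ∧
  (∀ (m : ℕ) (u : Matrix (Fin m) (Fin m) E) (S : Matrix (Fin m) (Fin m) ℂ),
      ν m (scalRight u S) ≤ ν m u * opNorm S)

/-- The set of values `‖(φ^v)_m(u)‖_m` over all proper couples `(E, v)`, i.e. over all
matricially normed spaces `E` and all `v` in the closed unit ball of `M_n(E)`. -/
def hatNormSet (n : ℕ) {m : ℕ}
    (u : Matrix (Fin m) (Fin m) (Matrix (Fin n) (Fin n) ℂ)) : Set ℝ :=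
  { r | ∃ (E : Type) (_ : AddCommGroup E) (_ : Module ℂ E)
        (ν : ∀ m' : ℕ, Matrix (Fin m') (Fin m') E → ℝ),
        IsMatrixNorm ν ∧
        ∃ v : Matrix (Fin n) (Fin n) E, ν n v ≤ 1 ∧ r = ν m (matAmpl (matPhi v) u) }

/-- The matrix-norm of the matricially normed space `M̂_n`:
`‖u‖_m = sup { ‖(φ^v)_m(u)‖_m : (E, v) a proper couple }`. -/
noncomputable def hatNorm (n : ℕ) {m : ℕ}
    (u : Matrix (Fin m) (Fin m) (Matrix (Fin n) (Fin n) ℂ)) : ℝ :=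
  sSup (hatNormSet n u)

open scoped ComplexOrder in
/-- The trace norm `‖a‖_t` of a complex matrix: the sum of its singular values,
i.e. the trace of `√(aᴴ a)`. -/
noncomputable def traceNorm {n : ℕ} (a : Matrix (Fin n) (Fin n) ℂ) : ℝ :=
  (((Matrix.posSemidef_conjTranspose_mul_self a).1.eigenvectorUnitary.1 *
      Matrix.diagonal (((↑) : ℝ → ℂ) ∘ (Real.sqrt ∘ (Matrix.posSemidef_conjTranspose_mul_self a).1.eigenvalues)) *
      (star (Matrix.posSemidef_conjTranspose_mul_self a).1.eigenvectorUnitary :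
        Matrix (Fin n) (Fin n) ℂ)).trace).re

/-!
Write `a = c Σ U*` with `U` unitary, `Σ = diag(s)` the singular values and `c` a contraction.
For a proper couple `(E, v)`, `φ^v(a) = ∑ₖ sₖ wₖₖ` where `w = U* v c` has norm at most `‖v‖ ≤ 1`
by Axiom 2; each entry `wₖₖ`, moved to a corner by matrix units and cut out by Axiom 1, has norm
at most `‖w‖`. Hence `‖φ^v(a)‖ ≤ ∑ₖ sₖ = ‖a‖_t`. The bound is attained for `E = ℂ` with the
operator norms on `M_m`, at the contraction `v = U c*`, where `φ^v(a) = tr(v a) = ∑ₖ sₖ`.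
-/

open scoped Matrix.Norms.L2Operator ComplexOrder

namespace Matrix

variable {ι κ μ : Type*} [Fintype ι] [Fintype κ] [Fintype μ] [DecidableEq ι]

theorem l2_opNorm_le_one_of_isIdempotentElem {A : Matrix κ ι ℂ}
    (h : IsIdempotentElem (Aᴴ * A)) : ‖A‖ ≤ 1 := by
  have hsq : ‖Aᴴ * A‖ * ‖Aᴴ * A‖ = ‖Aᴴ * A‖ := by
    rw [← l2_opNorm_conjTranspose_mul_self, conjTranspose_mul, conjTranspose_conjTranspose, h.eq]
  have : ‖Aᴴ * A‖ ≤ 1 := by nlinarith [norm_nonneg (Aᴴ * A)]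
  rw [l2_opNorm_conjTranspose_mul_self] at this
  nlinarith [norm_nonneg A]

theorem l2_opNorm_le_one_of_conjTranspose_mul_self_eq_one {A : Matrix κ ι ℂ}
    (h : Aᴴ * A = 1) : ‖A‖ ≤ 1 :=
  l2_opNorm_le_one_of_isIdempotentElem (h ▸ IsIdempotentElem.one)

theorem l2_opNorm_single_one_le [DecidableEq κ] (i : κ) (j : ι) :
    ‖(single i j 1 : Matrix κ ι ℂ)‖ ≤ 1 := by
  apply l2_opNorm_le_one_of_isIdempotentElem
  rw [conjTranspose_single, star_one, single_mul_single_same, one_mul, IsIdempotentElem,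
    single_mul_single_same, one_mul]

theorem l2_opNorm_mul_mul_le [DecidableEq μ] {A : Matrix κ ι ℂ} {B : Matrix ι μ ℂ}
    (hA : ‖A‖ ≤ 1) (hB : ‖B‖ ≤ 1) (x : Matrix ι ι ℂ) : ‖A * x * B‖ ≤ ‖x‖ :=
  calc ‖A * x * B‖ ≤ ‖A‖ * ‖x‖ * ‖B‖ :=
        (l2_opNorm_mul _ _).trans (mul_le_mul_of_nonneg_right (l2_opNorm_mul _ _) (norm_nonneg _))
    _ ≤ 1 * ‖x‖ * 1 := by gcongr
    _ = ‖x‖ := by ring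

theorem l2_opNorm_mul_mul_conjTranspose [DecidableEq κ] {P : Matrix κ ι ℂ} (hP : Pᴴ * P = 1)
    (u : Matrix ι ι ℂ) : ‖P * u * Pᴴ‖ = ‖u‖ := by
  have hP₁ : ‖P‖ ≤ 1 := l2_opNorm_le_one_of_conjTranspose_mul_self_eq_one hP
  have hP₂ : ‖Pᴴ‖ ≤ 1 := (l2_opNorm_conjTranspose P).trans_le hP₁
  refine le_antisymm (l2_opNorm_mul_mul_le hP₁ hP₂ u) ?_
  calc ‖u‖ = ‖Pᴴ * (P * u * Pᴴ) * P‖ := by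
        simp only [Matrix.mul_assoc, ← Matrix.mul_assoc Pᴴ P, hP, Matrix.one_mul,
          Matrix.mul_one]
    _ ≤ ‖P * u * Pᴴ‖ := l2_opNorm_mul_mul_le hP₂ hP₁ _

def blockInclusion (m k : ℕ) : Matrix (Fin (m + k)) (Fin m) ℂ :=
  (fromRows (1 : Matrix (Fin m) (Fin m) ℂ) 0).submatrix finSumFinEquiv.symm id

theorem conjTranspose_blockInclusion_mul_self (m k : ℕ) :
    (blockInclusion m k)ᴴ * blockInclusion m k = 1 := by
  rw [blockInclusion, conjTranspose_submatrix, conjTranspose_fromRows_eq_fromCols_conjTranspose,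
    submatrix_mul_equiv, fromCols_mul_fromRows]
  simp

theorem matDSum_zero_eq_blockInclusion_conj {m k : ℕ} (u : Matrix (Fin m) (Fin m) ℂ) :
    MatDSum u (0 : Matrix (Fin k) (Fin k) ℂ) =
      blockInclusion m k * u * (blockInclusion m k)ᴴ := by
  rw [blockInclusion, conjTranspose_submatrix, conjTranspose_fromRows_eq_fromCols_conjTranspose,
    MatDSum, reindex_apply, ← submatrix_id_id u,
    ← submatrix_mul _ u _ id id Function.bijective_id,
    ← submatrix_mul _ _ _ id _ Function.bijective_id, fromRows_mul, fromRows_mul_fromCols]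
  simp

theorem l2_opNorm_matDSum_zero {m k : ℕ} (u : Matrix (Fin m) (Fin m) ℂ) :
    ‖MatDSum u (0 : Matrix (Fin k) (Fin k) ℂ)‖ = ‖u‖ := by
  rw [matDSum_zero_eq_blockInclusion_conj,
    l2_opNorm_mul_mul_conjTranspose (conjTranspose_blockInclusion_mul_self m k)]

theorem l2_opNorm_of_fin_one (x : ℂ) : ‖(of fun _ _ : Fin 1 => x)‖ = ‖x‖ := by
  rw [show (of fun _ _ : Fin 1 => x) = diagonal fun _ => x by
    ext i j; simp [Subsingleton.elim i j], l2_opNorm_diagonal, pi_norm_const]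

section SingularValueDecomposition

variable (a : Matrix ι ι ℂ)

def singularUnitary : Matrix ι ι ℂ :=
  (posSemidef_conjTranspose_mul_self a).1.eigenvectorUnitary

def singularValues (i : ι) : ℝ :=
  √((posSemidef_conjTranspose_mul_self a).1.eigenvalues i)

/-- Since `(0 : ℂ)⁻¹ = 0`, `cᴴ c` is the projection onto the coordinates with `sᵢ ≠ 0`. -/
def leftSingularMatrix : Matrix ι ι ℂ :=
  a * singularUnitary a * diagonal fun i => (singularValues a i : ℂ)⁻¹

theorem conjTranspose_singularUnitary_mul_self : (singularUnitary a)ᴴ * singularUnitary a = 1 :=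
  Unitary.coe_star_mul_self _

theorem singularUnitary_mul_conjTranspose_self : singularUnitary a * (singularUnitary a)ᴴ = 1 :=
  Unitary.coe_mul_star_self _

theorem singularValues_nonneg (i : ι) : 0 ≤ singularValues a i := Real.sqrt_nonneg _

theorem conjTranspose_mul_self_mul_singularUnitary :
    (a * singularUnitary a)ᴴ * (a * singularUnitary a) =
      diagonal fun i => (singularValues a i : ℂ) * singularValues a i := by
  have h := (posSemidef_conjTranspose_mul_self a).1.conjStarAlgAut_star_eigenvectorUnitary
  simp only [Unitary.conjStarAlgAut_apply, Unitary.coe_star, star_star] at h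
  rw [conjTranspose_mul, Matrix.mul_assoc, ← Matrix.mul_assoc aᴴ, ← Matrix.mul_assoc,
    ← star_eq_conjTranspose]
  refine h.trans (congrArg diagonal (funext fun i => ?_))
  rw [Function.comp_apply, ← Complex.ofReal_mul, singularValues,
    Real.mul_self_sqrt ((posSemidef_conjTranspose_mul_self a).eigenvalues_nonneg i)]
  rfl

theorem conjTranspose_leftSingularMatrix_mul_self :
    (leftSingularMatrix a)ᴴ * leftSingularMatrix a =
      diagonal fun i => (singularValues a i : ℂ)⁻¹ * singularValues a i := by
  rw [leftSingularMatrix, conjTranspose_mul, diagonal_conjTranspose, Matrix.mul_assoc,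
    ← Matrix.mul_assoc (a * singularUnitary a)ᴴ, conjTranspose_mul_self_mul_singularUnitary,
    diagonal_mul_diagonal, diagonal_mul_diagonal]
  refine congrArg diagonal (funext fun i => ?_)
  simp only [Pi.star_apply, star_inv₀, Complex.star_def, Complex.conj_ofReal]
  rcases eq_or_ne (singularValues a i : ℂ) 0 with h | h
  · simp [h]
  · field_simp

theorem leftSingularMatrix_mul_diagonal :
    leftSingularMatrix a * diagonal (fun i => (singularValues a i : ℂ)) =
      a * singularUnitary a := by
  set b := a * singularUnitary a
  have hker :
      b * (1 - diagonal fun i => (singularValues a i : ℂ)⁻¹ * singularValues a i) = 0 := by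
    rw [← diagonal_one, diagonal_sub, ← conjTranspose_mul_self_eq_zero, conjTranspose_mul,
      Matrix.mul_assoc, ← Matrix.mul_assoc bᴴ, conjTranspose_mul_self_mul_singularUnitary,
      diagonal_conjTranspose, diagonal_mul_diagonal, diagonal_mul_diagonal, ← diagonal_zero]
    refine congrArg diagonal (funext fun i => ?_)
    rcases eq_or_ne (singularValues a i : ℂ) 0 with h | h <;> simp [h]
  rw [Matrix.mul_sub, Matrix.mul_one, sub_eq_zero] at hker
  rw [leftSingularMatrix, Matrix.mul_assoc, diagonal_mul_diagonal, ← hker]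

theorem eq_leftSingularMatrix_mul_diagonal_mul :
    a = leftSingularMatrix a * diagonal (fun i => (singularValues a i : ℂ)) *
      (singularUnitary a)ᴴ := by
  rw [leftSingularMatrix_mul_diagonal, Matrix.mul_assoc,
    singularUnitary_mul_conjTranspose_self, Matrix.mul_one]

theorem conjTranspose_leftSingularMatrix_mul_self_mul_diagonal :
    (leftSingularMatrix a)ᴴ * leftSingularMatrix a *
        diagonal (fun i => (singularValues a i : ℂ)) =
      diagonal fun i => (singularValues a i : ℂ) := by
  rw [conjTranspose_leftSingularMatrix_mul_self, diagonal_mul_diagonal]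
  exact congrArg diagonal (funext fun i => inv_mul_mul_self _)

theorem l2_opNorm_leftSingularMatrix_le : ‖leftSingularMatrix a‖ ≤ 1 := by
  refine l2_opNorm_le_one_of_isIdempotentElem ?_
  rw [IsIdempotentElem, conjTranspose_leftSingularMatrix_mul_self, diagonal_mul_diagonal]
  refine congrArg diagonal (funext fun i => ?_)
  rcases eq_or_ne (singularValues a i : ℂ) 0 with h | h <;> simp [h]

theorem l2_opNorm_singularUnitary_le : ‖singularUnitary a‖ ≤ 1 :=
  l2_opNorm_le_one_of_conjTranspose_mul_self_eq_one (conjTranspose_singularUnitary_mul_self a)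

theorem l2_opNorm_conjTranspose_singularUnitary_le : ‖(singularUnitary a)ᴴ‖ ≤ 1 :=
  (l2_opNorm_conjTranspose _).trans_le (l2_opNorm_singularUnitary_le a)

end SingularValueDecomposition

theorem traceNorm_eq_sum_singularValues {n : ℕ} (a : Matrix (Fin n) (Fin n) ℂ) :
    traceNorm a = ∑ i, singularValues a i := by
  rw [traceNorm, trace_mul_cycle, Unitary.coe_star_mul_self, Matrix.one_mul, trace_diagonal,
    Complex.re_sum]
  rfl

end Matrix

theorem matDSum_zero_of_fin_one {E : Type*} [Zero E] {m : ℕ} (x : E) :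
    MatDSum (of fun _ _ : Fin 1 => x) (0 : Matrix (Fin m) (Fin m) E) =
      single (finSumFinEquiv (Sum.inl 0)) (finSumFinEquiv (Sum.inl 0)) x := by
  ext i j
  obtain ⟨i, rfl⟩ := finSumFinEquiv.surjective i
  obtain ⟨j, rfl⟩ := finSumFinEquiv.surjective j
  rcases i with i | i <;> rcases j with j | j <;>
    simp [MatDSum, Fin.fin_one_eq_zero, -finSumFinEquiv_apply_left, -finSumFinEquiv_apply_right]

theorem scalLeft_single_scalRight_single {E : Type*} [AddCommMonoid E] [Module ℂ E] {n : ℕ}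
    (w : Matrix (Fin n) (Fin n) E) (k l z : Fin n) :
    scalLeft (single z k 1) (scalRight w (single l z 1)) = single z z (w k l) := by
  ext i j
  rcases eq_or_ne z i with rfl | hi <;> rcases eq_or_ne z j with rfl | hj <;>
    simp [scalLeft, scalRight, single_apply, *]

theorem matPhi_mul_diagonal_mul {E : Type*} [AddCommMonoid E] [Module ℂ E] {n : ℕ}
    (v : Matrix (Fin n) (Fin n) E) (A B : Matrix (Fin n) (Fin n) ℂ) (d : Fin n → ℂ) :
    matPhi v (A * diagonal d * B) = ∑ k, d k • scalLeft B (scalRight v A) k k := by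
  simp only [matPhi, scalLeft, scalRight, of_apply, mul_apply, diagonal_apply, mul_ite, mul_zero,
    Finset.sum_ite_eq', Finset.mem_univ, if_true, Finset.sum_smul, Finset.smul_sum, smul_smul]
  rw [Finset.sum_congr rfl fun i _ => Finset.sum_comm, Finset.sum_comm]
  exact Finset.sum_congr rfl fun k _ => Finset.sum_congr rfl fun i _ =>
    Finset.sum_congr rfl fun j _ => by congr 1; ring

theorem matPhi_eq_trace_mul {n : ℕ} (v a : Matrix (Fin n) (Fin n) ℂ) :
    matPhi v a = trace (v * a) := by
  simp only [matPhi, trace, diag_apply, mul_apply, smul_eq_mul, mul_comm (a _ _)]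

theorem scalLeft_eq_mul {m : ℕ} (S u : Matrix (Fin m) (Fin m) ℂ) : scalLeft S u = S * u := by
  ext i j
  simp [scalLeft, mul_apply]

theorem scalRight_eq_mul {m : ℕ} (u S : Matrix (Fin m) (Fin m) ℂ) : scalRight u S = u * S := by
  ext i j
  simp [scalRight, mul_apply, mul_comm]

theorem isMatrixNorm_l2OpNorm : IsMatrixNorm (E := ℂ) fun _ u => ‖u‖ :=
  ⟨fun _ u v => norm_add_le u v, fun _ c u => norm_smul c u, fun _ _ => norm_eq_zero,
    fun _ _ u => l2_opNorm_matDSum_zero u,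
    fun _ S u => (scalLeft_eq_mul S u).symm ▸ l2_opNorm_mul S u,
    fun _ u S => (scalRight_eq_mul u S).symm ▸ l2_opNorm_mul u S⟩

namespace IsMatrixNorm

variable {E : Type} [AddCommGroup E] [Module ℂ E] {ν : ∀ m : ℕ, Matrix (Fin m) (Fin m) E → ℝ}

theorem add_le (hν : IsMatrixNorm ν) {m : ℕ} (u v : Matrix (Fin m) (Fin m) E) :
    ν m (u + v) ≤ ν m u + ν m v :=
  hν.1 m u v

theorem smul_eq (hν : IsMatrixNorm ν) {m : ℕ} (c : ℂ) (u : Matrix (Fin m) (Fin m) E) :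
    ν m (c • u) = ‖c‖ * ν m u :=
  hν.2.1 m c u

theorem map_zero (hν : IsMatrixNorm ν) (m : ℕ) : ν m 0 = 0 :=
  (hν.2.2.1 m 0).2 rfl

theorem matDSum_zero (hν : IsMatrixNorm ν) {m : ℕ} (k : ℕ) (u : Matrix (Fin m) (Fin m) E) :
    ν (m + k) (MatDSum u 0) = ν m u :=
  hν.2.2.2.1 m k u

theorem scalLeft_le (hν : IsMatrixNorm ν) {m : ℕ} (S : Matrix (Fin m) (Fin m) ℂ)
    (u : Matrix (Fin m) (Fin m) E) : ν m (scalLeft S u) ≤ ‖S‖ * ν m u :=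
  hν.2.2.2.2.1 m S u

theorem scalRight_le (hν : IsMatrixNorm ν) {m : ℕ} (u : Matrix (Fin m) (Fin m) E)
    (S : Matrix (Fin m) (Fin m) ℂ) : ν m (scalRight u S) ≤ ν m u * ‖S‖ :=
  hν.2.2.2.2.2 m u S

theorem nonneg (hν : IsMatrixNorm ν) {m : ℕ} (u : Matrix (Fin m) (Fin m) E) : 0 ≤ ν m u := by
  have hneg : ν m (-u) = ν m u := by simpa using hν.smul_eq (-1) u
  have := hν.add_le u (-u)
  rw [add_neg_cancel, hν.map_zero, hneg] at this
  linarith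

theorem scalLeft_scalRight_le (hν : IsMatrixNorm ν) {m : ℕ} {A B : Matrix (Fin m) (Fin m) ℂ}
    (hA : ‖A‖ ≤ 1) (hB : ‖B‖ ≤ 1) (w : Matrix (Fin m) (Fin m) E) :
    ν m (scalLeft A (scalRight w B)) ≤ ν m w :=
  calc ν m (scalLeft A (scalRight w B)) ≤ ‖A‖ * ν m (scalRight w B) := hν.scalLeft_le A _
    _ ≤ ν m (scalRight w B) := mul_le_of_le_one_left (hν.nonneg _) hA
    _ ≤ ν m w * ‖B‖ := hν.scalRight_le w B
    _ ≤ ν m w := mul_le_of_le_one_right (hν.nonneg _) hB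

theorem entry_le (hν : IsMatrixNorm ν) {n : ℕ} (w : Matrix (Fin n) (Fin n) E) (k l : Fin n) :
    ν 1 (of fun _ _ => w k l) ≤ ν n w := by
  obtain ⟨m, rfl⟩ : ∃ m, n = 1 + m := ⟨n - 1, by have := k.pos; omega⟩
  set z : Fin (1 + m) := finSumFinEquiv (Sum.inl 0)
  calc ν 1 (of fun _ _ => w k l) = ν (1 + m) (MatDSum (of fun _ _ => w k l) 0) :=
        (hν.matDSum_zero m _).symm
    _ = ν (1 + m) (scalLeft (single z k 1) (scalRight w (single l z 1))) := by
        rw [matDSum_zero_of_fin_one, scalLeft_single_scalRight_single]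
    _ ≤ ν (1 + m) w :=
        hν.scalLeft_scalRight_le (l2_opNorm_single_one_le z k) (l2_opNorm_single_one_le l z) w

theorem matPhi_mul_diagonal_mul_le (hν : IsMatrixNorm ν) {n : ℕ}
    {A B : Matrix (Fin n) (Fin n) ℂ} (hA : ‖A‖ ≤ 1) (hB : ‖B‖ ≤ 1) (d : Fin n → ℂ)
    (v : Matrix (Fin n) (Fin n) E) :
    ν 1 (of fun _ _ => matPhi v (A * diagonal d * B)) ≤ (∑ k, ‖d k‖) * ν n v := by
  set w := scalLeft B (scalRight v A)
  calc ν 1 (of fun _ _ => matPhi v (A * diagonal d * B))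
      = ν 1 (∑ k, d k • of fun _ _ => w k k) := by
        congr 1
        ext
        simp [matPhi_mul_diagonal_mul, Matrix.sum_apply, w]
    _ ≤ ∑ k, ‖d k‖ * ν 1 (of fun _ _ => w k k) :=
        (Finset.le_sum_of_subadditive _ (hν.map_zero 1).le hν.add_le _ _).trans_eq
          (Finset.sum_congr rfl fun k _ => hν.smul_eq _ _)
    _ ≤ ∑ k, ‖d k‖ * ν n v := Finset.sum_le_sum fun k _ => mul_le_mul_of_nonneg_left
        ((hν.entry_le w k k).trans (hν.scalLeft_scalRight_le hB hA v)) (norm_nonneg _)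
    _ = (∑ k, ‖d k‖) * ν n v := Finset.sum_mul .. |>.symm

end IsMatrixNorm

theorem le_traceNorm_of_mem_hatNormSet {n : ℕ} {a : Matrix (Fin n) (Fin n) ℂ} {r : ℝ}
    (hr : r ∈ hatNormSet n (of fun _ _ : Fin 1 => a)) : r ≤ traceNorm a := by
  obtain ⟨E, _, _, ν, hν, v, hv, rfl⟩ := hr
  have key := hν.matPhi_mul_diagonal_mul_le (l2_opNorm_leftSingularMatrix_le a)
    (l2_opNorm_conjTranspose_singularUnitary_le a) (fun k => (singularValues a k : ℂ)) v
  rw [← eq_leftSingularMatrix_mul_diagonal_mul] at key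
  have hsum : ∑ k, ‖(singularValues a k : ℂ)‖ = traceNorm a := by
    simp only [Complex.norm_real, Real.norm_of_nonneg (singularValues_nonneg a _),
      traceNorm_eq_sum_singularValues]
  rw [hsum] at key
  calc _ ≤ traceNorm a * ν n v := key
    _ ≤ traceNorm a := mul_le_of_le_one_right (hsum ▸ Finset.sum_nonneg fun _ _ => norm_nonneg _) hv

theorem traceNorm_mem_hatNormSet {n : ℕ} (a : Matrix (Fin n) (Fin n) ℂ) :
    traceNorm a ∈ hatNormSet n (of fun _ _ : Fin 1 => a) := by
  set c := leftSingularMatrix a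
  set U := singularUnitary a
  refine ⟨ℂ, _, _, _, isMatrixNorm_l2OpNorm, U * cᴴ, ?_, ?_⟩
  · exact (l2_opNorm_mul U cᴴ).trans <| mul_le_one₀ (l2_opNorm_singularUnitary_le a)
      (norm_nonneg _) ((l2_opNorm_conjTranspose c).trans_le (l2_opNorm_leftSingularMatrix_le a))
  · have htrace : matPhi (U * cᴴ) a = ∑ k, (singularValues a k : ℂ) := by
      have hprod :
          U * cᴴ * a = U * (cᴴ * c * diagonal fun k => (singularValues a k : ℂ)) * Uᴴ := by
        conv_lhs => rw [eq_leftSingularMatrix_mul_diagonal_mul a]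
        simp only [Matrix.mul_assoc, c, U]
      rw [matPhi_eq_trace_mul, hprod, conjTranspose_leftSingularMatrix_mul_self_mul_diagonal,
        trace_mul_cycle, conjTranspose_singularUnitary_mul_self, Matrix.one_mul, trace_diagonal]
    show traceNorm a = ‖of fun _ _ : Fin 1 => matPhi (U * cᴴ) a‖
    rw [l2_opNorm_of_fin_one, htrace, ← Complex.ofReal_sum, Complex.norm_real,
      Real.norm_of_nonneg (Finset.sum_nonneg fun k _ => singularValues_nonneg a k),
      traceNorm_eq_sum_singularValues]

theorem hatNorm_one_eq_traceNorm_general (n : ℕ)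
    (a : Matrix (Fin n) (Fin n) ℂ) :
    hatNorm n (Matrix.of fun _ _ : Fin 1 => a) = traceNorm a :=
  IsGreatest.csSup_eq ⟨traceNorm_mem_hatNormSet a, fun _ => le_traceNorm_of_mem_hatNormSet⟩

/-- **Theorem 6.** The underlying normed space of `M̂_n` is `𝕋_n`: for every `a ∈ M_n`,
the norm of `a` in `M_1(M̂_n)` equals the trace norm `‖a‖_t`. -/
theorem hatNorm_one_eq_traceNorm (n : ℕ) (hn : 0 < n)
    (a : Matrix (Fin n) (Fin n) ℂ) :
    hatNorm n (Matrix.of fun _ _ : Fin 1 => a) = traceNorm a :=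
  hatNorm_one_eq_traceNorm_general n a
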